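/- arXiv:2305.06736 — 2 statements merged into one kernel-verified Lean document; each statement's English description precedes it below -/
import Mathlib

section
/- Let T be a nonempty Hausdorff compact topological space and h : ℝ^p × T → ℝ, f : ℝ^p → ℝ. Assume x̂ ∈ Ω (Ω open in ℝ^p) maximizes f over { x ∈ Ω : h(x,t) ≥ 0 for all t ∈ T }, and that: (a) T(x̂) := { t ∈ T : h(x̂,t) = 0 } is nonempty; (b) f is Gateaux differentiable at x̂ and the family (h(·,t))_{t∈T} is equi-Gateaux differentiable at x̂ with differentials ∇_x h(x̂,t); (c) the family (h(·,t))_{t ∈ T \ T(x̂)} is equi-lower semicontinuous at x̂; (d) t ↦ h(x̂,t) and t ↦ ∇_x h(x̂,t) are continuous. Then there exist λ_0, …, λ_k ≥ 0 and t_1, …, t_k ∈ T(x̂) with k ≤ p and λ_0 + ⋯ + λ_k = 1 such that λ_0 d_Gf(x̂) + Σ_{i=1}^k λ_i ∇_x h(x̂, t_i) = 0. If moreover 0 ∉ conv{ ∇_x h(x̂,t) : t ∈ T(x̂) }, then λ_0 ≠ 0. -/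
open Topology Filter Set

noncomputable section

section Defs

variable {E : Type*} [AddCommGroup E] [Module ℝ E] [TopologicalSpace E]

/-- The canonical map from the topological dual of `E` to the weak-star dual. -/
def toWD (φ : E →L[ℝ] ℝ) : WeakDual ℝ E := φ

/-- The weak-star closed convex hull of a set of continuous linear functionals. -/
def wcch (B : Set (E →L[ℝ] ℝ)) : Set (WeakDual ℝ E) :=
  closure (convexHull ℝ (toWD '' B))

/-- `f` is Gateaux differentiable at `x` with Gateaux-differential `f'`. -/
def HasGateauxAt (f : E → ℝ) (f' : E →L[ℝ] ℝ) (x : E) : Prop :=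
  ∀ v : E, Tendsto (fun t : ℝ => (f (x + t • v) - f x - t * f' v) / t) (𝓝[>] 0) (𝓝 0)

/-- The family `C` is equi-Gateaux differentiable at `x`, with differentials given by `D`. -/
def EquiGateauxAt (C : Set (E → ℝ)) (D : (E → ℝ) → E →L[ℝ] ℝ) (x : E) : Prop :=
  (∀ φ ∈ C, HasGateauxAt φ (D φ) x) ∧
  ∀ v : E, ∀ ε : ℝ, 0 < ε → ∃ δ : ℝ, 0 < δ ∧ ∀ t : ℝ, 0 < t → t < δ →
    ∀ φ ∈ C, |(φ (x + t • v) - φ x - t * (D φ) v) / t| ≤ ε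

/-- The family `C` is equi-lower semicontinuous at `x`. -/
def EquiLscAt (C : Set (E → ℝ)) (x : E) : Prop :=
  ∀ ε : ℝ, 0 < ε → ∃ O ∈ 𝓝 x, ∀ y ∈ O, ∀ φ ∈ C, φ y - φ x > -ε

/-- `[C]^× = {x ∈ E : φ(x) ≥ 0 for all φ ∈ C}`. -/
def polarSet (C : Set (E → ℝ)) : Set E := {x | ∀ φ ∈ C, 0 ≤ φ x}

/-- The multiplier set `T_C(x̂)`. -/
def multSet (C : Set (E → ℝ)) (D : (E → ℝ) → E →L[ℝ] ℝ) (x : E) : Set (WeakDual ℝ E) :=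
  ⋂ n ∈ {n : ℕ | 1 ≤ n}, wcch (D '' {φ | φ ∈ C ∧ φ x ∈ Icc (0:ℝ) (1/(n:ℝ))})

/-- `F` is weak-admissible at `x ∈ F`, determined by `C` (with differentials `D`). -/
def WeakAdmissibleAt (F : Set E) (C : Set (E → ℝ)) (D : (E → ℝ) → E →L[ℝ] ℝ) (x : E) : Prop :=
  x ∈ F ∧ C.Nonempty ∧ F = polarSet C ∧ EquiGateauxAt C D x ∧
    ({φ | φ ∈ C ∧ φ x ≠ 0} = ∅ ∨ EquiLscAt {φ | φ ∈ C ∧ φ x ≠ 0} x) ∧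
    IsCompact (wcch (D '' C))

end Defs

section NormedDefs

variable {Y : Type*} [NormedAddCommGroup Y] [NormedSpace ℝ Y]

/-- `A` is admissible at `x ∈ A`, determined by `C` (with differentials `D`). -/
def AdmissibleAt (A : Set Y) (C : Set (Y → ℝ)) (D : (Y → ℝ) → Y →L[ℝ] ℝ) (x : Y) : Prop :=
  x ∈ A ∧ C.Nonempty ∧ A = polarSet C ∧ EquiGateauxAt C D x ∧
    (∃ r : NNReal, ∃ ε : ℝ, 0 < ε ∧ ∀ φ ∈ C, LipschitzOnWith r φ (Metric.ball x ε)) ∧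
    toWD (0 : Y →L[ℝ] ℝ) ∉ wcch (D '' C)

/-- The recession cone of a set. -/
def recCone (K : Set Y) : Set Y := {v | ∀ l : ℝ, 0 < l → ∀ x ∈ K, x + l • v ∈ K}

/-- The barrier cone of `K`: functionals bounded above on `K`. -/
def barCone (K : Set Y) : Set (Y →L[ℝ] ℝ) := {φ | BddAbove (φ '' K)}

/-- The dual positive cone `A*`. -/
def posDualCone (A : Set Y) : Set (Y →L[ℝ] ℝ) := {φ | ∀ y ∈ A, 0 ≤ φ y}

end NormedDefs

/-!
If `0` were not in the convex hull of `f'` and the active gradients `D t` (those with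
`h x̂ t = 0`), a compact set in the finite-dimensional dual, Hahn–Banach would give a direction `v`
and a `u > 0` with `u < f' v` and `u < D t v` for every active `t`. On the closed set of indices
where `D t v ≤ u`, the function `h x̂` has a positive minimum, which equi-lower semicontinuity
keeps positive near `x̂`; on the remaining indices equi-Gateaux differentiability makes
`h (x̂ + s • v) t` exceed `h x̂ t` for small `s > 0`. So `x̂ + s • v` is feasible with a larger
value of `f`, a contradiction. Carathéodory's theorem in the `p`-dimensional dual then shortens the
convex combination to `f'` and at most `p` active gradients.
-/

theorem AffineIndependent.card_le_finrank_add_one {k V ι : Type*} [DivisionRing k]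
    [AddCommGroup V] [Module k V] [FiniteDimensional k V] [Fintype ι] {z : ι → V}
    (hz : AffineIndependent k z) : Fintype.card ι ≤ Module.finrank k V + 1 :=
  hz.card_le_finrank_succ.trans (by grw [Submodule.finrank_le])

theorem IsCompact.convexHull_of_finiteDimensional {E : Type*} [NormedAddCommGroup E]
    [NormedSpace ℝ E] [FiniteDimensional ℝ E] {S : Set E} (hS : IsCompact S) :
    IsCompact (convexHull ℝ S) := by
  classical
  rcases S.eq_empty_or_nonempty with rfl | ⟨s₀, hs₀⟩
  · simp
  set n := Module.finrank ℝ E + 1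
  -- Carathéodory: every point of the hull is a convex combination of `n` points of `S`.
  suffices convexHull ℝ S = (fun q : (Fin n → ℝ) × (Fin n → E) => ∑ i, q.1 i • q.2 i) ''
      (stdSimplex ℝ (Fin n) ×ˢ univ.pi fun _ => S) by
    rw [this]
    exact ((isCompact_stdSimplex _ _).prod (isCompact_univ_pi fun _ => hS)).image (by fun_prop)
  refine Subset.antisymm (fun x hx => ?_) ?_
  · obtain ⟨ι, _, z, w, hzS, hz, hw, hw1, rfl⟩ := eq_pos_convex_span_of_mem_convexHull hx
    obtain ⟨e⟩ : Nonempty (ι ↪ Fin n) := Function.Embedding.nonempty_of_card_le <| by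
      simpa [n] using hz.card_le_finrank_add_one
    refine ⟨(Function.extend e w 0, Function.extend e z fun _ => s₀), ⟨⟨fun j => ?_, ?_⟩,
      fun j _ => ?_⟩, ?_⟩
    · by_cases hj : j ∈ range e
      · obtain ⟨i, rfl⟩ := hj
        simpa [e.injective.extend_apply] using (hw i).le
      · simp [Function.extend_apply' _ _ _ hj]
    · rw [← hw1]
      exact (Fintype.sum_of_injective e e.injective w (Function.extend e w 0)
        (fun j hj => Function.extend_apply' _ _ _ hj)
        fun i => (e.injective.extend_apply _ _ i).symm).symm
    · by_cases hj : j ∈ range e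
      · obtain ⟨i, rfl⟩ := hj
        simpa [e.injective.extend_apply] using hzS ⟨i, rfl⟩
      · simpa [Function.extend_apply' _ _ _ hj] using hs₀
    · exact (Fintype.sum_of_injective e e.injective _ _
        (fun j hj => by simp [Function.extend_apply' _ _ _ hj])
        fun i => by simp [e.injective.extend_apply]).symm
  · rintro _ ⟨⟨w, z⟩, ⟨⟨hw, hw1⟩, hz⟩, rfl⟩
    exact mem_convexHull_of_exists_fintype w z hw hw1 (fun i => hz i (mem_univ i)) rfl

theorem exists_forall_lt_apply_of_zero_notMem_convexHull {E : Type*} [NormedAddCommGroup E]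
    [NormedSpace ℝ E] [FiniteDimensional ℝ E] {S : Set (E →L[ℝ] ℝ)} (hS : IsCompact S)
    (h0 : (0 : E →L[ℝ] ℝ) ∉ convexHull ℝ S) :
    ∃ v : E, ∃ u : ℝ, 0 < u ∧ ∀ φ ∈ S, u < φ v := by
  obtain ⟨g, u, hg0, hgS⟩ := geometric_hahn_banach_point_closed (convex_convexHull ℝ S)
    hS.convexHull_of_finiteDimensional.isClosed h0
  -- a continuous functional on the dual of a finite-dimensional space is evaluation at a point
  set v := (Module.evalEquiv ℝ E).symm
    (g.toLinearMap ∘ₗ (LinearMap.toContinuousLinearMap : Module.Dual ℝ E ≃ₗ[ℝ] _).toLinearMap)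
  refine ⟨v, u, by simpa using hg0, fun φ hφ => ?_⟩
  have : φ v = g φ := Module.apply_evalEquiv_symm_apply ℝ E φ.toLinearMap _
  exact this ▸ hgS φ (subset_convexHull ℝ S hφ)

section ConvexCombination

variable {V : Type*} [AddCommGroup V] [Module ℝ V]

theorem exists_add_sum_smul_eq_zero_of_sum_smul_eq_zero {ι : Type*} [Fintype ι] [Nonempty ι]
    {z : ι → V} {w c : ι → ℝ} {y : V} (hw : ∀ i, 0 < w i) (hwz : ∑ i, w i • z i = 0)
    (hcz : ∑ i, c i • z i = y) :
    ∃ j, ∃ d : ι → ℝ, (∀ i, 0 ≤ d i) ∧ d j = 0 ∧ y + ∑ i, d i • z i = 0 := by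
  obtain ⟨j, -, hj⟩ := Finset.univ.exists_max_image (fun i => c i / w i) Finset.univ_nonempty
  refine ⟨j, fun i => c j / w j * w i - c i, fun i => ?_, ?_, ?_⟩
  · exact sub_nonneg.2 ((div_le_iff₀ (hw i)).1 (hj i (Finset.mem_univ i)))
  · simp [div_mul_cancel₀ _ (hw j).ne']
  · simp only [sub_smul, mul_smul, Finset.sum_sub_distrib, ← Finset.smul_sum, hwz, hcz,
      smul_zero, zero_sub, add_neg_cancel]

theorem exists_fin_combination_of_finset_sum_eq_zero {ι : Type*} {A : Set V} {y : V} {n : ℕ}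
    (s : Finset ι) (hs : s.card ≤ n) (l₀ : ℝ) (l : ι → ℝ) (a : ι → V) (hl₀ : 0 ≤ l₀)
    (hl : ∀ i ∈ s, 0 ≤ l i) (ha : ∀ i ∈ s, a i ∈ A) (hpos : 0 < l₀ + ∑ i ∈ s, l i)
    (hcomb : l₀ • y + ∑ i ∈ s, l i • a i = 0) (hl₀A : (0 : V) ∉ convexHull ℝ A → l₀ ≠ 0) :
    ∃ k : ℕ, k ≤ n ∧ ∃ (l₀' : ℝ) (l' : Fin k → ℝ) (a' : Fin k → V),
      0 ≤ l₀' ∧ (∀ i, 0 ≤ l' i) ∧ (∀ i, a' i ∈ A) ∧ l₀' + ∑ i, l' i = 1 ∧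
      l₀' • y + ∑ i, l' i • a' i = 0 ∧ ((0 : V) ∉ convexHull ℝ A → l₀' ≠ 0) := by
  set τ := l₀ + ∑ i ∈ s, l i
  let e := s.equivFin.symm
  refine ⟨s.card, hs, l₀ / τ, fun i => l (e i) / τ, fun i => a (e i), div_nonneg hl₀ hpos.le,
    fun i => div_nonneg (hl _ (e i).2) hpos.le, fun i => ha _ (e i).2, ?_, ?_,
    fun h => div_ne_zero (hl₀A h) hpos.ne'⟩
  · rw [← Finset.sum_div, (e.sum_comp fun i => l i).trans (s.sum_coe_sort l), ← add_div,
      div_self hpos.ne']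
  · simp only [div_eq_inv_mul, mul_smul, ← Finset.smul_sum, ← smul_add]
    rw [(e.sum_comp fun i => l i • a i).trans (s.sum_coe_sort fun i => l i • a i), hcomb,
      smul_zero]

theorem exists_fin_combination_of_zero_mem_convexHull_insert [FiniteDimensional ℝ V]
    {A : Set V} {y : V} (h0 : (0 : V) ∈ convexHull ℝ (insert y A)) :
    ∃ k : ℕ, k ≤ Module.finrank ℝ V ∧ ∃ (l₀ : ℝ) (l : Fin k → ℝ) (a : Fin k → V),
      0 ≤ l₀ ∧ (∀ i, 0 ≤ l i) ∧ (∀ i, a i ∈ A) ∧ l₀ + ∑ i, l i = 1 ∧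
      l₀ • y + ∑ i, l i • a i = 0 ∧ ((0 : V) ∉ convexHull ℝ A → l₀ ≠ 0) := by
  classical
  obtain ⟨ι, _, z, w, hzA, hz, hw, hw1, hwz⟩ := eq_pos_convex_span_of_mem_convexHull h0
  have hcard := hz.card_le_finrank_add_one
  by_cases hy : ∃ i₀, z i₀ = y
  · obtain ⟨i₀, rfl⟩ := hy
    refine exists_fin_combination_of_finset_sum_eq_zero (Finset.univ.erase i₀) ?_ (w i₀) w z
      (hw i₀).le (fun i _ => (hw i).le) (fun i hi => ?_) ?_ ?_ fun _ => (hw i₀).ne'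
    · rw [Finset.card_erase_of_mem (Finset.mem_univ _), Finset.card_univ]
      omega
    · exact (hzA ⟨i, rfl⟩).resolve_left fun h => Finset.ne_of_mem_erase hi (hz.injective h)
    · rw [Finset.add_sum_erase _ _ (Finset.mem_univ _), hw1]
      exact one_pos
    · rw [Finset.add_sum_erase _ (fun i => w i • z i) (Finset.mem_univ _), hwz]
  push Not at hy
  have hzA' : ∀ i, z i ∈ A := fun i => (hzA ⟨i, rfl⟩).resolve_left (hy i)
  have h0A : (0 : V) ∈ convexHull ℝ A :=
    mem_convexHull_of_exists_fintype w z (fun i => (hw i).le) hw1 hzA' hwz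
  rcases hcard.lt_or_eq with hlt | heq
  · refine exists_fin_combination_of_finset_sum_eq_zero Finset.univ
      (by simpa [Nat.lt_succ_iff] using hlt) 0 w z le_rfl (fun i _ => (hw i).le)
      (fun i _ => hzA' i) (by simp [hw1]) (by simpa using hwz) fun h => absurd h0A h
  -- `0` is interior to the simplex spanned by the `z i`, so `-y` is a nonnegative combination of
  -- all but one of them.
  have : Nonempty ι := Fintype.card_pos_iff.1 (by omega)
  have hyspan : y ∈ affineSpan ℝ (range z) := by
    rw [hz.affineSpan_eq_top_iff_card_eq_finrank_add_one.2 heq]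
    exact AffineSubspace.mem_top _ _ _
  obtain ⟨c, hc1, hcz⟩ := eq_affineCombination_of_mem_affineSpan_of_fintype hyspan
  rw [Finset.affineCombination_eq_linear_combination _ _ _ hc1] at hcz
  obtain ⟨j, d, hd, hdj, hdz⟩ := exists_add_sum_smul_eq_zero_of_sum_smul_eq_zero hw hwz hcz.symm
  refine exists_fin_combination_of_finset_sum_eq_zero (Finset.univ.erase j) ?_ 1 d z
    zero_le_one (fun i _ => hd i) (fun i _ => hzA' i) ?_ ?_ fun _ => one_ne_zero
  · rw [Finset.card_erase_of_mem (Finset.mem_univ _), Finset.card_univ]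
    omega
  · exact add_pos_of_pos_of_nonneg one_pos (Finset.sum_nonneg fun i _ => hd i)
  · rwa [one_smul, Finset.sum_erase _ (by simp [hdj])]

end ConvexCombination

theorem eventually_forall_pos_of_equiLsc {E T : Type*} [TopologicalSpace E] [TopologicalSpace T]
    [CompactSpace T] {h : E → T → ℝ} {x : E} {K : Set T} (hK : IsClosed K)
    (hcont : Continuous fun t => h x t) (hpos : ∀ t ∈ K, 0 < h x t)
    (hlsc : ∀ ε : ℝ, 0 < ε → ∃ O ∈ 𝓝 x, ∀ y ∈ O, ∀ t : T, h x t ≠ 0 → h y t - h x t > -ε) :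
    ∀ᶠ y in 𝓝 x, ∀ t ∈ K, 0 < h y t := by
  rcases K.eq_empty_or_nonempty with rfl | hKne
  · simp
  obtain ⟨t₀, ht₀, hmin⟩ := hK.isCompact.exists_isMinOn hKne hcont.continuousOn
  obtain ⟨O, hO, hlscO⟩ := hlsc _ (hpos t₀ ht₀)
  filter_upwards [hO] with y hy t ht
  have hle : h x t₀ ≤ h x t := hmin ht
  linarith [hlscO y hy t (hpos t ht).ne']

section Ascent

variable {E T : Type*} [AddCommGroup E] [Module ℝ E] [TopologicalSpace E]

theorem HasGateauxAt.eventually_lt {f : E → ℝ} {f' : E →L[ℝ] ℝ} {x v : E}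
    (hf : HasGateauxAt f f' x) (hv : 0 < f' v) :
    ∀ᶠ s in 𝓝[>] (0 : ℝ), f x < f (x + s • v) := by
  filter_upwards [self_mem_nhdsWithin, (hf v).eventually (lt_mem_nhds (neg_neg_of_pos hv))]
    with s (hs : 0 < s) hquot
  have := (lt_div_iff₀ hs).1 hquot
  nlinarith

theorem eventually_forall_lt_of_equiGateaux {h : E → T → ℝ} {D : T → E →L[ℝ] ℝ} {x v : E}
    {c : ℝ} (hc : 0 < c)
    (hequi : ∀ ε : ℝ, 0 < ε → ∃ δ : ℝ, 0 < δ ∧ ∀ s : ℝ, 0 < s → s < δ → ∀ t : T,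
      |(h (x + s • v) t - h x t - s * (D t) v) / s| ≤ ε) :
    ∀ᶠ s in 𝓝[>] (0 : ℝ), ∀ t, c < D t v → h x t < h (x + s • v) t := by
  obtain ⟨δ, hδ, hequiδ⟩ := hequi c hc
  filter_upwards [Ioo_mem_nhdsGT hδ] with s ⟨hs, hsδ⟩ t ht
  have := (le_div_iff₀ hs).1 (neg_le_of_abs_le (hequiδ s hs hsδ t))
  nlinarith

theorem apply_nonpos_of_forall_active_lt [ContinuousAdd E] [ContinuousSMul ℝ E]
    [TopologicalSpace T] [CompactSpace T] {Ω : Set E} (hΩ : IsOpen Ω) {h : E → T → ℝ}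
    {f : E → ℝ} {x : E} (hxΩ : x ∈ Ω) (hfeas : ∀ t : T, 0 ≤ h x t)
    (hmax : ∀ y ∈ Ω, (∀ t : T, 0 ≤ h y t) → f y ≤ f x) {f' : E →L[ℝ] ℝ}
    (hf : HasGateauxAt f f' x) {D : T → E →L[ℝ] ℝ} {v : E}
    (hequi : ∀ ε : ℝ, 0 < ε → ∃ δ : ℝ, 0 < δ ∧ ∀ s : ℝ, 0 < s → s < δ → ∀ t : T,
      |(h (x + s • v) t - h x t - s * (D t) v) / s| ≤ ε)
    (hlsc : ∀ ε : ℝ, 0 < ε → ∃ O ∈ 𝓝 x, ∀ y ∈ O, ∀ t : T, h x t ≠ 0 → h y t - h x t > -ε)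
    (hcont : Continuous fun t => h x t) (hDv : Continuous fun t => D t v) {c : ℝ} (hc : 0 < c)
    (hactive : ∀ t, h x t = 0 → c < D t v) :
    f' v ≤ 0 := by
  by_contra! hfv
  have hpos : ∀ t ∈ {t | D t v ≤ c}, 0 < h x t := fun t ht =>
    (hfeas t).lt_of_ne fun h0 => (hactive t h0.symm).not_ge ht
  have hpath : Tendsto (fun s : ℝ => x + s • v) (𝓝[>] 0) (𝓝 x) :=
    tendsto_nhdsWithin_of_tendsto_nhds (Continuous.tendsto' (by fun_prop) _ _ (by simp))
  obtain ⟨s, hsΩ, hsK, hsU, hsf⟩ := ((hpath.eventually (hΩ.mem_nhds hxΩ)).and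
    ((hpath.eventually (eventually_forall_pos_of_equiLsc (isClosed_le hDv continuous_const)
      hcont hpos hlsc)).and ((eventually_forall_lt_of_equiGateaux hc hequi).and
        (hf.eventually_lt hfv)))).exists
  refine (hmax _ hsΩ fun t => ?_).not_gt hsf
  by_cases ht : c < D t v
  · exact (hfeas t).trans (hsU t ht).le
  · exact (hsK t (not_lt.1 ht)).le

end Ascent

theorem zero_mem_convexHull_insert_active_gradients {E T : Type*} [NormedAddCommGroup E]
    [NormedSpace ℝ E] [FiniteDimensional ℝ E] [TopologicalSpace T] [CompactSpace T]
    {Ω : Set E} (hΩ : IsOpen Ω) {h : E → T → ℝ} {f : E → ℝ} {x : E} (hxΩ : x ∈ Ω)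
    (hfeas : ∀ t : T, 0 ≤ h x t) (hmax : ∀ y ∈ Ω, (∀ t : T, 0 ≤ h y t) → f y ≤ f x)
    {f' : E →L[ℝ] ℝ} (hf : HasGateauxAt f f' x) {D : T → E →L[ℝ] ℝ}
    (hequi : ∀ v : E, ∀ ε : ℝ, 0 < ε → ∃ δ : ℝ, 0 < δ ∧ ∀ s : ℝ, 0 < s → s < δ → ∀ t : T,
      |(h (x + s • v) t - h x t - s * (D t) v) / s| ≤ ε)
    (hlsc : ∀ ε : ℝ, 0 < ε → ∃ O ∈ 𝓝 x, ∀ y ∈ O, ∀ t : T, h x t ≠ 0 → h y t - h x t > -ε)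
    (hcont : Continuous fun t => h x t) (hD : Continuous D) :
    (0 : E →L[ℝ] ℝ) ∈ convexHull ℝ (insert f' {q | ∃ s, h x s = 0 ∧ D s = q}) := by
  by_contra h0
  have hA : IsCompact {q | ∃ s, h x s = 0 ∧ D s = q} :=
    (isClosed_singleton.preimage hcont).isCompact.image hD
  obtain ⟨v, u, hu, huS⟩ := exists_forall_lt_apply_of_zero_notMem_convexHull (hA.insert f') h0
  have hf'v := apply_nonpos_of_forall_active_lt hΩ hxΩ hfeas hmax hf (hequi v) hlsc hcont
    (hD.clm_apply continuous_const) hu fun t ht => huS _ (mem_insert_of_mem _ ⟨t, ht, rfl⟩)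
  linarith [huS f' (mem_insert _ _)]

theorem semiInfinite_multiplier_rule_general
    {p : ℕ} {T : Type*} [TopologicalSpace T] [CompactSpace T]
    (Ω : Set (Fin p → ℝ)) (hΩ : IsOpen Ω)
    (h : (Fin p → ℝ) → T → ℝ) (f : (Fin p → ℝ) → ℝ)
    (xh : Fin p → ℝ) (hxΩ : xh ∈ Ω)
    (hfeas : ∀ t : T, 0 ≤ h xh t)
    (hmax : ∀ x ∈ Ω, (∀ t : T, 0 ≤ h x t) → f x ≤ f xh)
    (f' : (Fin p → ℝ) →L[ℝ] ℝ) (hf : HasGateauxAt f f' xh)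
    (D : T → ((Fin p → ℝ) →L[ℝ] ℝ))
    (hequi : ∀ v : Fin p → ℝ, ∀ ε : ℝ, 0 < ε → ∃ δ : ℝ, 0 < δ ∧
      ∀ s : ℝ, 0 < s → s < δ → ∀ t : T,
        |(h (xh + s • v) t - h xh t - s * (D t) v) / s| ≤ ε)
    (hlsc : ∀ ε : ℝ, 0 < ε → ∃ O ∈ 𝓝 xh, ∀ y ∈ O, ∀ t : T, h xh t ≠ 0 →
      h y t - h xh t > -ε)
    (hcont1 : Continuous fun t : T => h xh t)
    (hcont2 : Continuous D) :
    ∃ k : ℕ, k ≤ p ∧ ∃ (l0 : ℝ) (l : Fin k → ℝ) (t : Fin k → T),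
      0 ≤ l0 ∧ (∀ i, 0 ≤ l i) ∧ (∀ i, h xh (t i) = 0) ∧
      l0 + ∑ i, l i = 1 ∧
      l0 • f' + ∑ i, l i • D (t i) = 0 ∧
      ((0 : (Fin p → ℝ) →L[ℝ] ℝ) ∉
          convexHull ℝ {q : (Fin p → ℝ) →L[ℝ] ℝ | ∃ s : T, h xh s = 0 ∧ D s = q} →
        l0 ≠ 0) := by
  have hrank : Module.finrank ℝ ((Fin p → ℝ) →L[ℝ] ℝ) = p := by
    rw [← (LinearMap.toContinuousLinearMap :
      ((Fin p → ℝ) →ₗ[ℝ] ℝ) ≃ₗ[ℝ] ((Fin p → ℝ) →L[ℝ] ℝ)).finrank_eq]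
    simp
  obtain ⟨k, hk, l0, l, a, hl0, hl, ha, hsum, hcomb, hl0A⟩ :=
    exists_fin_combination_of_zero_mem_convexHull_insert <|
      zero_mem_convexHull_insert_active_gradients hΩ hxΩ hfeas hmax hf hequi hlsc hcont1 hcont2
  choose t ht hDt using ha
  refine ⟨k, hrank ▸ hk, l0, l, t, hl0, hl, ht, hsum, ?_, hl0A⟩
  simpa only [hDt] using hcomb

/-- (Semi-infinite programming multiplier rule.) If `xh ∈ Ω ⊆ ℝ^p` maximizes
`f` over `{x ∈ Ω : h(x,t) ≥ 0 ∀ t ∈ T}` with `T` compact Hausdorff nonempty, `T(xh) ≠ ∅`, `f`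
Gateaux differentiable at `xh`, the family `(h(·,t))_t` equi-Gateaux differentiable at `xh`,
`(h(·,t))_{t ∉ T(xh)}` equi-lsc at `xh`, and `t ↦ h(xh,t)`, `t ↦ ∇_x h(xh,t)` continuous, then
there are `λ_0, …, λ_k ≥ 0`, `t_1, …, t_k ∈ T(xh)`, `k ≤ p`, `λ_0 + ⋯ + λ_k = 1` with
`λ_0 d_Gf(xh) + Σ λ_i ∇_x h(xh,t_i) = 0`; and if `0 ∉ conv{∇_x h(xh,t) : t ∈ T(xh)}` then
`λ_0 ≠ 0`. -/
theorem semiInfinite_multiplier_rule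
    {p : ℕ} {T : Type*} [TopologicalSpace T] [CompactSpace T] [T2Space T] [Nonempty T]
    (Ω : Set (Fin p → ℝ)) (hΩ : IsOpen Ω)
    (h : (Fin p → ℝ) → T → ℝ) (f : (Fin p → ℝ) → ℝ)
    (xh : Fin p → ℝ) (hxΩ : xh ∈ Ω)
    (hfeas : ∀ t : T, 0 ≤ h xh t)
    (hmax : ∀ x ∈ Ω, (∀ t : T, 0 ≤ h x t) → f x ≤ f xh)
    (hTx : ∃ t : T, h xh t = 0)
    (f' : (Fin p → ℝ) →L[ℝ] ℝ) (hf : HasGateauxAt f f' xh)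
    (D : T → ((Fin p → ℝ) →L[ℝ] ℝ))
    (hdiff : ∀ t : T, HasGateauxAt (fun x => h x t) (D t) xh)
    (hequi : ∀ v : Fin p → ℝ, ∀ ε : ℝ, 0 < ε → ∃ δ : ℝ, 0 < δ ∧
      ∀ s : ℝ, 0 < s → s < δ → ∀ t : T,
        |(h (xh + s • v) t - h xh t - s * (D t) v) / s| ≤ ε)
    (hlsc : ∀ ε : ℝ, 0 < ε → ∃ O ∈ 𝓝 xh, ∀ y ∈ O, ∀ t : T, h xh t ≠ 0 →
      h y t - h xh t > -ε)
    (hcont1 : Continuous fun t : T => h xh t)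
    (hcont2 : Continuous D) :
    ∃ k : ℕ, k ≤ p ∧ ∃ (l0 : ℝ) (l : Fin k → ℝ) (t : Fin k → T),
      0 ≤ l0 ∧ (∀ i, 0 ≤ l i) ∧ (∀ i, h xh (t i) = 0) ∧
      l0 + ∑ i, l i = 1 ∧
      l0 • f' + ∑ i, l i • D (t i) = 0 ∧
      ((0 : (Fin p → ℝ) →L[ℝ] ℝ) ∉
          convexHull ℝ {q : (Fin p → ℝ) →L[ℝ] ℝ | ∃ s : T, h xh s = 0 ∧ D s = q} →
        l0 ≠ 0) :=
  semiInfinite_multiplier_rule_general Ω hΩ h f xh hxΩ hfeas hmax f' hf D hequi hlsc hcont1 hcont2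
end
end

section
/- Let E be a Hausdorff locally convex topological vector space, Ω ⊂ E open, (Y, ‖·‖) a normed space, and g : Ω → Y Gateaux differentiable and continuous at x̂ ∈ Ω. Let C be a family of real-valued functions on Y which is r-equi-Lipschitz at g(x̂) (all φ ∈ C are r-Lipschitz on a common ball around g(x̂)) and equi-Gateaux differentiable at g(x̂). Then: (i) the weak-star closed convex hull of { d_Gφ(g(x̂)) : φ ∈ C } is a weak-star compact subset of Y* (it is contained in the ball of radius r); (ii) the family { φ∘g : φ ∈ C } is equi-Gateaux differentiable at x̂ and d_G(φ∘g)(x̂) = d_Gφ(g(x̂)) ∘ d_Gg(x̂) for every φ ∈ C. -/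
open Topology Filter Set

noncomputable section

/-!
Each differential `D φ` is a Gateaux derivative of a function that is `r`-Lipschitz near
`g x̂`, so `‖D φ‖ ≤ r`; the differentials therefore lie in the weak-star closed ball of
radius `r`, which is convex, weak-star closed and, by Banach–Alaoglu, weak-star compact.

For the chain rule, write `g (x̂ + t v) = g x̂ + t w + t z_t` with `w = g' v` and `z_t → 0`.
The remainder of `φ ∘ g` in direction `v` then splits as the remainder of `φ` in direction `w`,
which is small uniformly in `φ ∈ C`, plus `(φ (g x̂ + t w + t z_t) - φ (g x̂ + t w)) / t`,
which the common Lipschitz constant bounds by `r ‖z_t‖`, again uniformly in `φ`.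
-/

open Metric
open scoped NNReal

theorem eventually_nhdsGT_zero_iff_exists_pos {P : ℝ → Prop} :
    (∀ᶠ t in 𝓝[>] (0 : ℝ), P t) ↔ ∃ δ, 0 < δ ∧ ∀ t, 0 < t → t < δ → P t := by
  rw [Filter.Eventually, mem_nhdsGT_iff_exists_Ioo_subset]
  exact ⟨fun ⟨δ, hδ, h⟩ => ⟨δ, hδ, fun t ht htδ => h ⟨ht, htδ⟩⟩,
    fun ⟨δ, hδ, h⟩ => ⟨δ, hδ, fun t ht => h t ht.1 ht.2⟩⟩

section Normed

variable {Y : Type*} [NormedAddCommGroup Y] [NormedSpace ℝ Y]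

theorem LipschitzOnWith.abs_sub_div_le {f : Y → ℝ} {r : ℝ≥0} {s : Set Y}
    (hf : LipschitzOnWith r f s) {a b : Y} (ha : a ∈ s) (hb : b ∈ s) (t : ℝ) :
    |(f a - f b) / t| ≤ r * ‖t⁻¹ • (a - b)‖ := by
  rw [abs_div, norm_smul, norm_inv, Real.norm_eq_abs, mul_left_comm, ← div_eq_inv_mul]
  gcongr
  simpa only [Real.dist_eq, dist_eq_norm, Real.norm_eq_abs] using hf.dist_le_mul a ha b hb

theorem tendsto_add_smul_nhdsGT (y w : Y) :
    Tendsto (fun t : ℝ => y + t • w) (𝓝[>] 0) (𝓝 y) := by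
  have h : Continuous fun t : ℝ => y + t • w := by fun_prop
  simpa using h.continuousAt.tendsto.mono_left (nhdsWithin_le_nhds (a := (0 : ℝ)))

theorem tendsto_of_tendsto_remainder {γ : ℝ → Y} {y w : Y}
    (hγ : Tendsto (fun t => t⁻¹ • (γ t - y - t • w)) (𝓝[>] 0) (𝓝 0)) :
    Tendsto γ (𝓝[>] 0) (𝓝 y) := by
  have hlim : Tendsto (fun t : ℝ => y + t • w + t • (t⁻¹ • (γ t - y - t • w))) (𝓝[>] 0)
      (𝓝 (y + (0 : ℝ) • (0 : Y))) :=
    (tendsto_add_smul_nhdsGT y w).add ((tendsto_nhdsWithin_of_tendsto_nhds tendsto_id).smul hγ)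
  rw [zero_smul, add_zero] at hlim
  refine hlim.congr' ?_
  filter_upwards [self_mem_nhdsWithin] with t (ht : (0 : ℝ) < t)
  rw [smul_inv_smul₀ ht.ne']
  abel

theorem HasGateauxAt.tendsto_slope {f : Y → ℝ} {f' : Y →L[ℝ] ℝ} {x : Y}
    (hf : HasGateauxAt f f' x) (w : Y) :
    Tendsto (fun t : ℝ => (f (x + t • w) - f x) / t) (𝓝[>] 0) (𝓝 (f' w)) := by
  have hlim := (hf w).add_const (f' w)
  rw [zero_add] at hlim
  refine hlim.congr' ?_
  filter_upwards [self_mem_nhdsWithin] with t (ht : (0 : ℝ) < t)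
  field_simp
  ring

theorem HasGateauxAt.norm_le_of_lipschitzOnWith {f : Y → ℝ} {f' : Y →L[ℝ] ℝ} {x : Y}
    {r : ℝ≥0} {ε : ℝ} (hf : HasGateauxAt f f' x) (hε : 0 < ε)
    (hlip : LipschitzOnWith r f (ball x ε)) : ‖f'‖ ≤ r := by
  refine ContinuousLinearMap.opNorm_le_bound _ r.coe_nonneg fun w => ?_
  refine le_of_tendsto (hf.tendsto_slope w).abs ?_
  filter_upwards [self_mem_nhdsWithin, (tendsto_add_smul_nhdsGT x w).eventually
    (ball_mem_nhds x hε)] with t (ht : (0 : ℝ) < t) hmem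
  calc |(f (x + t • w) - f x) / t| ≤ r * ‖t⁻¹ • (x + t • w - x)‖ :=
        hlip.abs_sub_div_le hmem (mem_ball_self hε) t
    _ = r * ‖w‖ := by rw [add_sub_cancel_left, inv_smul_smul₀ ht.ne']

theorem toWD_image_closedBall (r : ℝ) :
    toWD '' closedBall (0 : Y →L[ℝ] ℝ) r =
      WeakDual.toStrongDual ⁻¹' closedBall (0 : StrongDual ℝ Y) r :=
  ext fun ψ => ⟨by rintro ⟨φ, hφ, rfl⟩; exact hφ, fun h => ⟨WeakDual.toStrongDual ψ, h, rfl⟩⟩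

theorem wcch_subset_closedBall {B : Set (Y →L[ℝ] ℝ)} {r : ℝ} (hB : ∀ φ ∈ B, ‖φ‖ ≤ r) :
    wcch B ⊆ toWD '' closedBall 0 r := by
  rw [wcch, toWD_image_closedBall]
  refine closure_minimal (convexHull_min ?_ ?_) (WeakDual.isClosed_closedBall 0 r)
  · rintro _ ⟨φ, hφ, rfl⟩
    exact mem_closedBall_zero_iff.2 (hB φ hφ)
  · exact (convex_closedBall (0 : StrongDual ℝ Y) r).linear_preimage
      (WeakDual.toStrongDual : WeakDual ℝ Y ≃ₗ[ℝ] StrongDual ℝ Y).toLinearMap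

theorem isCompact_wcch_of_forall_norm_le {B : Set (Y →L[ℝ] ℝ)} {r : ℝ}
    (hB : ∀ φ ∈ B, ‖φ‖ ≤ r) : IsCompact (wcch B) := by
  refine (WeakDual.isCompact_closedBall (𝕜 := ℝ) 0 r).of_isClosed_subset isClosed_closure ?_
  rw [← toWD_image_closedBall]
  exact wcch_subset_closedBall hB

theorem eventually_forall_abs_remainder_comp_le {C : Set (Y → ℝ)} {D : (Y → ℝ) → Y →L[ℝ] ℝ}
    {y w : Y} {r : ℝ≥0} {ε : ℝ} (hε : 0 < ε) (hlip : ∀ φ ∈ C, LipschitzOnWith r φ (ball y ε))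
    (hequi : ∀ ε' > 0, ∀ᶠ t in 𝓝[>] (0 : ℝ),
      ∀ φ ∈ C, |(φ (y + t • w) - φ y - t * D φ w) / t| ≤ ε')
    {γ : ℝ → Y} (hγ : Tendsto (fun t => t⁻¹ • (γ t - y - t • w)) (𝓝[>] 0) (𝓝 0))
    {ε' : ℝ} (hε' : 0 < ε') :
    ∀ᶠ t in 𝓝[>] (0 : ℝ), ∀ φ ∈ C, |(φ (γ t) - φ y - t * D φ w) / t| ≤ ε' := by
  have hsmall : ∀ᶠ t in 𝓝[>] (0 : ℝ), r * ‖t⁻¹ • (γ t - y - t • w)‖ < ε' / 2 := by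
    have h := hγ.norm.const_mul (r : ℝ)
    rw [norm_zero, mul_zero] at h
    exact h.eventually (gt_mem_nhds (half_pos hε'))
  filter_upwards [hequi (ε' / 2) (half_pos hε'), hsmall,
    (tendsto_add_smul_nhdsGT y w).eventually (ball_mem_nhds y hε),
    (tendsto_of_tendsto_remainder hγ).eventually (ball_mem_nhds y hε)]
    with t hrem hz hline hcurve φ hφ
  have hlipt : |(φ (γ t) - φ (y + t • w)) / t| ≤ r * ‖t⁻¹ • (γ t - y - t • w)‖ := by
    simpa only [sub_add_eq_sub_sub] using (hlip φ hφ).abs_sub_div_le hcurve hline t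
  calc |(φ (γ t) - φ y - t * D φ w) / t|
      = |(φ (γ t) - φ (y + t • w)) / t + (φ (y + t • w) - φ y - t * D φ w) / t| := by
        congr 1; ring
    _ ≤ |(φ (γ t) - φ (y + t • w)) / t| + |(φ (y + t • w) - φ y - t * D φ w) / t| :=
        abs_add_le _ _
    _ ≤ ε' := by linarith [hrem φ hφ]

end Normed

theorem equiGateaux_comp_general
    {E : Type*} [AddCommGroup E] [Module ℝ E] [TopologicalSpace E]
    {Y : Type*} [NormedAddCommGroup Y] [NormedSpace ℝ Y]
    (xh : E)
    (g : E → Y) (g' : E →L[ℝ] Y)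
    (hg : ∀ v : E, Filter.Tendsto
      (fun t : ℝ => t⁻¹ • (g (xh + t • v) - g xh - t • g' v)) (𝓝[>] 0) (𝓝 0))
    (C : Set (Y → ℝ)) (D : (Y → ℝ) → Y →L[ℝ] ℝ)
    (r : NNReal) (ε : ℝ) (hε : 0 < ε)
    (hlip : ∀ φ ∈ C, LipschitzOnWith r φ (Metric.ball (g xh) ε))
    (hequi : EquiGateauxAt C D (g xh)) :
    (IsCompact (wcch (D '' C)) ∧
      wcch (D '' C) ⊆ toWD '' Metric.closedBall (0 : Y →L[ℝ] ℝ) (r : ℝ)) ∧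
    (∀ φ ∈ C, HasGateauxAt (φ ∘ g) ((D φ).comp g') xh) ∧
    (∀ v : E, ∀ ε' : ℝ, 0 < ε' → ∃ δ : ℝ, 0 < δ ∧ ∀ t : ℝ, 0 < t → t < δ →
      ∀ φ ∈ C, |(φ (g (xh + t • v)) - φ (g xh) - t * ((D φ).comp g') v) / t| ≤ ε') := by
  obtain ⟨hdiff, hunif⟩ := hequi
  have hnorm : ∀ ψ ∈ D '' C, ‖ψ‖ ≤ r := by
    rintro _ ⟨φ, hφ, rfl⟩
    exact (hdiff φ hφ).norm_le_of_lipschitzOnWith hε (hlip φ hφ)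
  have hcomp : ∀ v : E, ∀ ε' > 0, ∀ᶠ t in 𝓝[>] (0 : ℝ), ∀ φ ∈ C,
      |(φ (g (xh + t • v)) - φ (g xh) - t * ((D φ).comp g') v) / t| ≤ ε' := fun v _ hε' =>
    eventually_forall_abs_remainder_comp_le hε hlip
      (fun ε'' hε'' => eventually_nhdsGT_zero_iff_exists_pos.2 (hunif (g' v) ε'' hε'')) (hg v) hε'
  refine ⟨⟨isCompact_wcch_of_forall_norm_le hnorm, wcch_subset_closedBall hnorm⟩,
    fun φ hφ v => ?_, fun v ε' hε' => eventually_nhdsGT_zero_iff_exists_pos.1 (hcomp v ε' hε')⟩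
  refine Metric.tendsto_nhds.2 fun ε' hε' => ?_
  filter_upwards [hcomp v (ε' / 2) (half_pos hε')] with t ht
  rw [Real.dist_0_eq_abs]
  exact (ht φ hφ).trans_lt (half_lt_self hε')

/-- (Chain rule for equi-Gateaux families.) If `g : Ω → Y` is Gateaux
differentiable and continuous at `xh ∈ Ω`, and `C` is `r`-equi-Lipschitz and equi-Gateaux
differentiable at `g(xh)`, then the weak-star closed convex hull of `{d_Gφ(g(xh)) : φ ∈ C}`
is weak-star compact (contained in the ball of radius `r`), the family `{φ∘g : φ ∈ C}` is
equi-Gateaux differentiable at `xh`, and `d_G(φ∘g)(xh) = d_Gφ(g(xh)) ∘ d_Gg(xh)`. -/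
theorem equiGateaux_comp
    {E : Type*} [AddCommGroup E] [Module ℝ E] [TopologicalSpace E]
    [IsTopologicalAddGroup E] [ContinuousSMul ℝ E] [LocallyConvexSpace ℝ E] [T2Space E]
    {Y : Type*} [NormedAddCommGroup Y] [NormedSpace ℝ Y]
    (Ω : Set E) (hΩ : IsOpen Ω) (xh : E) (hxΩ : xh ∈ Ω)
    (g : E → Y) (g' : E →L[ℝ] Y)
    (hg : ∀ v : E, Filter.Tendsto
      (fun t : ℝ => t⁻¹ • (g (xh + t • v) - g xh - t • g' v)) (𝓝[>] 0) (𝓝 0))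
    (hgc : ContinuousAt g xh)
    (C : Set (Y → ℝ)) (D : (Y → ℝ) → Y →L[ℝ] ℝ)
    (r : NNReal) (ε : ℝ) (hε : 0 < ε)
    (hlip : ∀ φ ∈ C, LipschitzOnWith r φ (Metric.ball (g xh) ε))
    (hequi : EquiGateauxAt C D (g xh)) :
    (IsCompact (wcch (D '' C)) ∧
      wcch (D '' C) ⊆ toWD '' Metric.closedBall (0 : Y →L[ℝ] ℝ) (r : ℝ)) ∧
    (∀ φ ∈ C, HasGateauxAt (φ ∘ g) ((D φ).comp g') xh) ∧
    (∀ v : E, ∀ ε' : ℝ, 0 < ε' → ∃ δ : ℝ, 0 < δ ∧ ∀ t : ℝ, 0 < t → t < δ →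
      ∀ φ ∈ C, |(φ (g (xh + t • v)) - φ (g xh) - t * ((D φ).comp g') v) / t| ≤ ε') :=
  equiGateaux_comp_general xh g g' hg C D r ε hε hlip hequi
end
end
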